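/- arXiv:1711.05302 — 3 statements merged into one kernel-verified Lean document; each statement's English description precedes it below -/
import Mathlib

section
/- Let Γ be a free abelian group of finite rank, ‖·‖ a norm on Γ ⊗ ℝ, ω : Γ → ℝ a group homomorphism, C > 0 a real constant, and β ∈ Γ. Then the set of finite multisets {β_v} of nonzero elements of Γ satisfying Σ_v β_v = β and ‖β_v‖ ≤ C·ω(β_v) for every v is finite. -/
/-!
A nonzero charge has positive norm, so the charge bound forces `ω γ > 0` on every part of an
admissible multiset; hence each part satisfies `ω γ ≤ ω β` and `‖γ‖ ≤ C ω β`. Since `Γ` is a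
lattice in `ℝ ⊗ Γ`, only finitely many charges are that short, and on this finite set `ω` is
bounded below by some `ε > 0`, so a multiset summing to `β` has at most `ω β / ε` parts.
-/

open scoped TensorProduct

theorem Multiset.finite_setOf_card_le {α : Type*} {T : Set α} (hT : T.Finite) (N : ℕ) :
    {S : Multiset α | (∀ x ∈ S, x ∈ T) ∧ card S ≤ N}.Finite := by
  classical
  refine (Set.finite_Iic (N • hT.toFinset.val)).subset ?_
  rintro S ⟨hST, hcard⟩
  rw [Set.mem_Iic, le_iff_count]
  intro x
  by_cases hx : x ∈ S
  · rw [count_nsmul, count_eq_one_of_mem hT.toFinset.nodup (hT.mem_toFinset.2 (hST x hx)),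
      mul_one]
    exact (count_le_card x S).trans hcard
  · simp [count_eq_zero_of_notMem hx]

theorem Set.Finite.exists_pos_forall_le {α : Type*} {T : Set α} (hT : T.Finite) {f : α → ℝ}
    (hf : ∀ x ∈ T, 0 < f x) : ∃ ε > 0, ∀ x ∈ T, ε ≤ f x :=
  have hsmall : ∀ᶠ ε in nhdsWithin (0 : ℝ) (Set.Ioi 0), ∀ x ∈ T, ε ≤ f x :=
    (Filter.eventually_all_finite hT).2 fun x hx =>
      nhdsWithin_le_nhds (eventually_le_nhds (hf x hx))
  (eventually_mem_nhdsWithin.and hsmall).exists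

theorem Multiset.finite_setOf_sum_map_le {α : Type*} {T : Set α} (hT : T.Finite) {f : α → ℝ}
    (hf : ∀ x ∈ T, 0 < f x) (c : ℝ) :
    {S : Multiset α | (∀ x ∈ S, x ∈ T) ∧ (S.map f).sum ≤ c}.Finite := by
  obtain ⟨ε, hε, hεf⟩ := hT.exists_pos_forall_le hf
  refine (finite_setOf_card_le hT ⌈c / ε⌉₊).subset ?_
  rintro S ⟨hST, hsum⟩
  refine ⟨hST, Nat.cast_le.1 (le_trans ?_ (Nat.le_ceil _))⟩
  rw [le_div_iff₀ hε]
  calc (card S : ℝ) * ε = card (S.map f) • ε := by rw [card_map, nsmul_eq_mul]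
    _ ≤ (S.map f).sum := card_nsmul_le_sum fun _ hy => by
        obtain ⟨x, hx, rfl⟩ := mem_map.1 hy
        exact hεf x (hST x hx)
    _ ≤ c := hsum

theorem Module.Basis.range_mk_one_eq_span_baseChange {R M S ι : Type*} [CommSemiring R]
    [AddCommMonoid M] [Module R M] [Semiring S] [Algebra R S] (b : Module.Basis ι R M) :
    LinearMap.range (TensorProduct.mk R S M 1) = Submodule.span R (Set.range (b.baseChange S)) := by
  rw [LinearMap.range_eq_map, ← b.span_eq, Submodule.map_span, ← Set.range_comp]
  congr 2
  ext i
  simp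

section
variable {Γ : Type*} [AddCommGroup Γ]

theorem AddGroupNorm.apply_one_tmul_pos [Module.Flat ℤ Γ] (nm : AddGroupNorm (ℝ ⊗[ℤ] Γ)) {γ : Γ}
    (hγ : γ ≠ 0) :
    0 < nm (1 ⊗ₜ γ) :=
  map_pos_of_ne_zero nm fun h => hγ <| Module.Flat.tensorProduct_mk_injective ℤ Γ ℝ <| by
    simpa using h

theorem AddGroupNorm.finite_setOf_apply_one_tmul_le [Module.Free ℤ Γ] [Module.Finite ℤ Γ]
    (nm : AddGroupNorm (ℝ ⊗[ℤ] Γ))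
    (hnm : ∀ (c : ℝ) (x : ℝ ⊗[ℤ] Γ), nm (c • x) = |c| * nm x) (R : ℝ) :
    {γ : Γ | nm (1 ⊗ₜ γ) ≤ R}.Finite := by
  let _ := nm.toNormedAddCommGroup
  let _ : NormedSpace ℝ (ℝ ⊗[ℤ] Γ) := ⟨fun c x => (hnm c x).le⟩
  have hfin := ZSpan.setFinite_inter ((Module.Free.chooseBasis ℤ Γ).baseChange ℝ)
    (Metric.isBounded_closedBall (x := 0) (r := R))
  refine .of_finite_image (hfin.subset ?_) (Module.Flat.tensorProduct_mk_injective ℤ Γ ℝ).injOn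
  rintro _ ⟨γ, hγ, rfl⟩
  have hspan := LinearMap.mem_range_self (TensorProduct.mk ℤ ℝ Γ 1) γ
  rw [Module.Basis.range_mk_one_eq_span_baseChange (Module.Free.chooseBasis ℤ Γ)] at hspan
  -- `hspan` is stated for the tensor-product `ℤ`-module structure, the goal for the one of the
  -- normed group; the two agree definitionally but not syntactically.
  exact ⟨mem_closedBall_zero_iff.2 hγ, hspan⟩

end

/-- Let `Γ` be a free abelian group of finite rank, `nm` a norm on
`Γ ⊗ ℝ` (formalized as `ℝ ⊗[ℤ] Γ`, with `γ ↦ 1 ⊗ γ` the canonical embedding; the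
homogeneity hypothesis `hnm` makes `nm` a genuine vector-space norm), `ω : Γ → ℝ` a group
homomorphism, `C > 0` a real constant and `β ∈ Γ`.  Then the set of finite multisets
`{β_v}` of nonzero elements of `Γ` with `Σ_v β_v = β` and `‖β_v‖ ≤ C·ω(β_v)` for every `v`
is finite. -/
theorem finite_multisets_of_charge_bound
    (Γ : Type*) [AddCommGroup Γ] [Module.Free ℤ Γ] [Module.Finite ℤ Γ]
    (nm : AddGroupNorm (ℝ ⊗[ℤ] Γ))
    (hnm : ∀ (c : ℝ) (x : ℝ ⊗[ℤ] Γ), nm (c • x) = |c| * nm x)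
    (ω : Γ →+ ℝ) (C : ℝ) (hC : 0 < C) (β : Γ) :
    {S : Multiset Γ |
      (∀ γ ∈ S, γ ≠ 0 ∧ nm ((1 : ℝ) ⊗ₜ[ℤ] γ) ≤ C * ω γ) ∧ S.sum = β}.Finite := by
  have hT := (nm.finite_setOf_apply_one_tmul_le hnm (C * ω β)).inter_of_left {γ | 0 < ω γ}
  refine (Multiset.finite_setOf_sum_map_le hT (fun γ hγ => hγ.2) (ω β)).subset ?_
  rintro S ⟨hS, rfl⟩
  have hpos : ∀ γ ∈ S, 0 < ω γ := fun γ hγ =>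
    pos_of_mul_pos_right ((nm.apply_one_tmul_pos (hS γ hγ).1).trans_le (hS γ hγ).2) hC.le
  have hsum : (S.map ω).sum = ω S.sum := (map_multiset_sum ω S).symm
  refine ⟨fun γ hγ => ⟨(hS γ hγ).2.trans ?_, hpos γ hγ⟩, hsum.le⟩
  rw [← hsum]
  gcongr
  exact Multiset.single_le_sum (by simpa using fun γ hγ => (hpos γ hγ).le) _
    (Multiset.mem_map_of_mem ω hγ)
end

section
/- Let G be a stable decorated graph. Then the number N₀ of vertices v with β_v = 0 satisfies N₀ ≤ 2(N₁ − χ(G)), where N₁ is the number of vertices v with β_v ≠ 0 and χ(G) = Σ_{v ∈ V(G)} (χ_v − n_v) − |E(G)| is the Euler characteristic of G. -/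
/-! By the handshake lemma `∑ᵥ deg v = 2|E(G)|`, twice the Euler characteristic is
`∑ᵥ (2(χ_v − n_v) − deg v)`. Stability makes the summand at most `−1` at every vertex with
`β_v = 0`, and `χ_v ≤ 1` makes it at most `2` at every other vertex. -/

/-- A decorated graph (over a group `Γ` of topological charges): a finite set `H` of
half-edges, a finite set `V` of vertices, a fixed-point-free involution `σ` on the
half-edges (whose orbits are the edges), an attaching map `π : H → V`, a charge `β_v ∈ Γ`,
an Euler characteristic `χ_v ≤ 1` and a number of internal punctures `n_v ∈ ℤ_{≥0}` for
each vertex. -/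
structure DecoratedGraph (Γ : Type*) [AddCommGroup Γ] where
  H : Type
  V : Type
  fintypeH : Fintype H
  fintypeV : Fintype V
  σ : H → H
  σ_invol : ∀ h, σ (σ h) = h
  σ_ne : ∀ h, σ h ≠ h
  π : H → V
  β : V → Γ
  χ : V → ℤ
  χ_le_one : ∀ v, χ v ≤ 1
  n : V → ℕ

attribute [instance] DecoratedGraph.fintypeH DecoratedGraph.fintypeV

namespace DecoratedGraph

variable {Γ : Type*} [AddCommGroup Γ] (G : DecoratedGraph Γ)

/-- The set of edges of a decorated graph: the orbits of the involution `σ`. -/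
def EdgeType : Type := Quot (fun a b : G.H => b = a ∨ b = G.σ a)

/-- The number of edges `|E(G)|`. -/
noncomputable def edgeCount : ℕ := Nat.card G.EdgeType

/-- The homology class `β(G) = Σ_v β_v`. -/
noncomputable def homClass : Γ := ∑ v, G.β v

/-- The Euler characteristic `χ(G) = Σ_v (χ_v − n_v) − |E(G)|`. -/
noncomputable def eulerChar : ℤ := (∑ v, (G.χ v - (G.n v : ℤ))) - (G.edgeCount : ℤ)

/-- A vertex `v` is unstable if `β_v = 0` and `2χ_v − |π⁻¹(v)| ≥ 0`; the graph is stable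
if it has no unstable vertices. -/
def Stable : Prop :=
  ∀ v : G.V, ¬ (G.β v = 0 ∧ 0 ≤ 2 * G.χ v - (Nat.card {h : G.H // G.π h = v} : ℤ))

end DecoratedGraph

lemma Nat.card_eq_sum_card_fiber {α β : Type*} [Finite α] [Fintype β] (f : α → β) :
    Nat.card α = ∑ b, Nat.card {a // f a = b} := by
  rw [← Nat.card_congr (Equiv.sigmaFiberEquiv f), Nat.card_sigma]

namespace DecoratedGraph

variable {Γ : Type*} [AddCommGroup Γ] (G : DecoratedGraph Γ)

noncomputable def degree (v : G.V) : ℕ := Nat.card {h : G.H // G.π h = v}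

lemma edgeRel_equivalence : Equivalence (fun a b : G.H => b = a ∨ b = G.σ a) where
  refl _ := .inl rfl
  symm := by
    rintro a b (rfl | rfl)
    exacts [.inl rfl, .inr (G.σ_invol a).symm]
  trans := by
    rintro a b c (rfl | rfl) (rfl | rfl)
    exacts [.inl rfl, .inr rfl, .inr rfl, .inl (G.σ_invol a)]

def edgeOf (h : G.H) : G.EdgeType := Quot.mk _ h

lemma edgeOf_eq_edgeOf_iff {a b : G.H} : G.edgeOf a = G.edgeOf b ↔ b = a ∨ b = G.σ a :=
  Quot.eq.trans G.edgeRel_equivalence.eqvGen_iff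

lemma edgeOf_surjective : Function.Surjective G.edgeOf := Quot.exists_rep

lemma card_fiber_edgeOf (e : G.EdgeType) : Nat.card {b // G.edgeOf b = e} = 2 := by
  obtain ⟨a, rfl⟩ := G.edgeOf_surjective e
  have : {b // G.edgeOf b = G.edgeOf a} ≃ ({a, G.σ a} : Set G.H) :=
    Equiv.subtypeEquivRight fun b =>
      G.edgeOf_eq_edgeOf_iff.trans ⟨G.edgeRel_equivalence.symm, G.edgeRel_equivalence.symm⟩
  rw [Nat.card_congr this, Nat.card_coe_set_eq, Set.ncard_pair (G.σ_ne a).symm]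

instance : Finite G.EdgeType := Quot.finite _

lemma card_H_eq_two_mul_edgeCount : Nat.card G.H = 2 * G.edgeCount := by
  have : Fintype G.EdgeType := Fintype.ofFinite _
  rw [Nat.card_eq_sum_card_fiber G.edgeOf]
  simp [card_fiber_edgeOf, edgeCount, mul_comm]

lemma sum_degree : ∑ v, G.degree v = 2 * G.edgeCount := by
  rw [← card_H_eq_two_mul_edgeCount, Nat.card_eq_sum_card_fiber G.π]
  rfl

lemma sum_two_mul_sub_degree :
    ∑ v, (2 * (G.χ v - G.n v) - G.degree v : ℤ) = 2 * G.eulerChar := by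
  rw [Finset.sum_sub_distrib, ← Finset.mul_sum, eulerChar, ← Nat.cast_sum, sum_degree]
  push_cast
  ring

lemma two_mul_le_degree_add_two (v : G.V) : 2 * (G.χ v - G.n v) ≤ G.degree v + 2 := by
  have := G.χ_le_one v
  omega

lemma Stable.two_mul_lt_degree {G : DecoratedGraph Γ} (hG : G.Stable) {v : G.V}
    (hv : G.β v = 0) : 2 * (G.χ v - G.n v) < G.degree v := by
  have := hG v
  rw [degree]
  simp only [hv, true_and, not_le] at this
  omega

end DecoratedGraph

open DecoratedGraph Finset in
/-- For a stable decorated graph `G`, the number `N₀` of vertices with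
`β_v = 0` satisfies `N₀ ≤ 2(N₁ − χ(G))`, where `N₁` is the number of vertices with
`β_v ≠ 0` and `χ(G)` is the Euler characteristic of `G`. -/
theorem zero_charge_vertex_bound {Γ : Type*} [AddCommGroup Γ]
    (G : DecoratedGraph Γ) (hG : G.Stable) :
    (Nat.card {v : G.V // G.β v = 0} : ℤ) ≤
      2 * ((Nat.card {v : G.V // G.β v ≠ 0} : ℤ) - G.eulerChar) := by
  classical
  set f : G.V → ℤ := fun v => 2 * (G.χ v - G.n v) - G.degree v
  have h_zero : ∑ v with G.β v = 0, f v ≤ #{v | G.β v = 0} • (-1) :=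
    sum_le_card_nsmul _ _ _ fun v hv => by
      simp only [f]; linarith [hG.two_mul_lt_degree (mem_filter.1 hv).2]
  have h_ne : ∑ v with ¬G.β v = 0, f v ≤ #{v | ¬G.β v = 0} • 2 :=
    sum_le_card_nsmul _ _ _ fun v _ => by
      simp only [f]; linarith [G.two_mul_le_degree_add_two v]
  have h_total := sum_filter_add_sum_filter_not univ (fun v => G.β v = 0) f
  rw [sum_two_mul_sub_degree] at h_total
  simp only [Nat.card_eq_fintype_card, Fintype.card_subtype, nsmul_eq_mul] at *
  linarith
end

section
/- Let G be a finitely generated abelian group (with the discrete topology), γ ∈ G, and let X be the connected component of the identity of the Pontryagin dual Ĝ = Hom(G, U(1)), a compact topological group with normalized Haar probability measure μ. Then the integral ∫_X χ(γ) dμ(χ) (of the U(1) ⊂ ℂ valued function χ ↦ χ(γ)) is nonzero if and only if γ is a torsion element of G; moreover, in that case the integral equals 1. -/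
open MeasureTheory

/-- The Pontryagin dual `Ĝ = Hom(G, U(1))` of a (discrete) abelian group `G`: the group
homomorphisms from `G` to the circle group, topologized as a subspace of the product
`G → Circle` (for discrete `G`, the product topology coincides with the compact-open
topology). -/
abbrev CharGroup (G : Type*) [AddCommGroup G] : Type _ :=
  {f : G → Circle // ∀ x y : G, f (x + y) = f x * f y}

/-- The trivial character, the identity element of `Ĝ`. -/
noncomputable def charOne (G : Type*) [AddCommGroup G] : CharGroup G :=
  ⟨fun _ => 1, fun _ _ => (one_mul 1).symm⟩

/-- Pointwise multiplication of characters (the group operation of `Ĝ`). -/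
noncomputable def charMul {G : Type*} [AddCommGroup G] (a b : CharGroup G) : CharGroup G :=
  ⟨fun g => a.1 g * b.1 g, fun x y => by
    simp only []
    rw [a.2, b.2]
    exact mul_mul_mul_comm _ _ _ _⟩

/-!
If `n • γ = 0`, then on the identity component `X` of `Ĝ` the continuous function `χ ↦ χ γ`
takes values in the finite set of `n`-th roots of unity, so it is constant on the connected set
`X`, equal to its value `1` at the trivial character; as `μ` lives on `X`, the integral is `1`.
If `γ` has infinite order, then, `G` modulo torsion being free of finite rank, some
`φ : G →+ ℤ` has `φ γ ≠ 0`, and the path `t ↦ exp (i t φ)` of characters stays in `X` and reaches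
a `χ₀` with `χ₀ γ = -1`. Invariance of `μ` under translation by `χ₀` gives `I = χ₀ γ • I` for the
integral `I`, hence `I = 0`.
-/

lemma AddCommGroup.exists_addMonoidHom_int_ne_zero {G : Type*} [AddCommGroup G] [AddGroup.FG G]
    {γ : G} (hγ : ¬IsOfFinAddOrder γ) : ∃ φ : G →+ ℤ, φ γ ≠ 0 := by
  have hmk : Submodule.Quotient.mk (p := Submodule.torsion ℤ G) γ ≠ 0 := by
    rwa [Ne, Submodule.Quotient.mk_eq_zero, ← Submodule.mem_toAddSubgroup, Submodule.torsion_int]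
  obtain ⟨f, hf⟩ := Module.Projective.exists_dual_ne_zero ℤ hmk
  exact ⟨(f ∘ₗ (Submodule.torsion ℤ G).mkQ).toAddMonoidHom, hf⟩

namespace CharGroup

variable {G : Type*} [AddCommGroup G]

lemma map_zero (χ : CharGroup G) : χ.1 0 = 1 :=
  left_eq_mul.mp <| by rw [← χ.2 0 0, add_zero]

lemma map_nsmul (χ : CharGroup G) (n : ℕ) (g : G) : χ.1 (n • g) = χ.1 g ^ n := by
  induction n with
  | zero => simpa using χ.map_zero
  | succ k ih => rw [succ_nsmul, χ.2, ih, pow_succ]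

lemma continuous_eval (g : G) : Continuous fun χ : CharGroup G => χ.1 g :=
  (continuous_apply g).comp continuous_subtype_val

lemma continuous_charMul (χ₀ : CharGroup G) : Continuous (charMul χ₀) := by
  unfold charMul
  exact .subtype_mk (continuous_pi fun g => continuous_const.mul (continuous_eval g)) _

noncomputable def expOf (φ : G →+ ℝ) : CharGroup G :=
  ⟨fun g => Circle.exp (φ g), fun x y => by simp only [_root_.map_add, Circle.exp_add]⟩

lemma expOf_mem_connectedComponent (φ : G →+ ℝ) :
    expOf φ ∈ connectedComponent (charOne G) := by
  have hpath : Continuous fun t : ℝ => expOf (t • φ) :=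
    .subtype_mk (continuous_pi fun g =>
      Circle.exp.continuous.comp (continuous_id.mul continuous_const)) _
  have hzero : expOf ((0 : ℝ) • φ) = charOne G := by
    ext g
    simp [expOf, charOne]
  exact (isPreconnected_range hpath).subset_connectedComponent ⟨0, hzero⟩ ⟨1, by simp⟩

lemma eval_eq_one_of_mem_connectedComponent {γ : G} (hγ : IsOfFinAddOrder γ) {χ : CharGroup G}
    (hχ : χ ∈ connectedComponent (charOne G)) : (χ.1 γ : ℂ) = 1 := by
  obtain ⟨n, hn, hnγ⟩ := hγ.exists_nsmul_eq_zero
  have hroots : Set.MapsTo (fun χ : CharGroup G => (χ.1 γ : ℂ)) (connectedComponent (charOne G))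
      (Polynomial.nthRootsFinset n (1 : ℂ)) := fun χ _ => by
    rw [Finset.mem_coe, Polynomial.mem_nthRootsFinset hn, ← Circle.coe_pow, ← map_nsmul, hnγ,
      map_zero, Circle.coe_one]
  exact isPreconnected_connectedComponent.constant_of_mapsTo (Finset.finite_toSet _).isDiscrete
    (continuous_subtype_val.comp (continuous_eval γ)).continuousOn hroots hχ mem_connectedComponent

lemma exists_mem_connectedComponent_eval_eq_neg_one [AddGroup.FG G] {γ : G}
    (hγ : ¬IsOfFinAddOrder γ) :
    ∃ χ₀ ∈ connectedComponent (charOne G), (χ₀.1 γ : ℂ) = -1 := by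
  obtain ⟨φ, hφ⟩ := AddCommGroup.exists_addMonoidHom_int_ne_zero hγ
  refine ⟨expOf ((Real.pi / φ γ) • (Int.castAddHom ℝ).comp φ), expOf_mem_connectedComponent _, ?_⟩
  simp [expOf, hφ, Circle.coe_exp]

variable [MeasurableSpace (CharGroup G)] {μ : Measure (CharGroup G)}

lemma integral_eval_eq_one [IsProbabilityMeasure μ]
    (hsupp : μ (connectedComponent (charOne G))ᶜ = 0) {γ : G} (hγ : IsOfFinAddOrder γ) :
    ∫ χ, (χ.1 γ : ℂ) ∂μ = 1 := by
  have hX : ∀ᵐ χ ∂μ, χ ∈ connectedComponent (charOne G) := mem_ae_iff.mpr hsupp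
  rw [integral_congr_ae (hX.mono fun χ hχ => eval_eq_one_of_mem_connectedComponent hγ hχ)]
  simp

variable [BorelSpace (CharGroup G)]

lemma integral_eval_eq_mul_integral {χ₀ : CharGroup G} (hχ₀ : μ.map (charMul χ₀) = μ) (γ : G) :
    ∫ χ, (χ.1 γ : ℂ) ∂μ = χ₀.1 γ * ∫ χ, (χ.1 γ : ℂ) ∂μ := by
  have hcont : Continuous fun χ : CharGroup G => (χ.1 γ : ℂ) :=
    continuous_subtype_val.comp (continuous_eval γ)
  calc ∫ χ, (χ.1 γ : ℂ) ∂μ = ∫ χ, ((charMul χ₀ χ).1 γ : ℂ) ∂μ := by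
        conv_lhs => rw [← hχ₀]
        rw [integral_map (continuous_charMul χ₀).aemeasurable hcont.aestronglyMeasurable]
    _ = χ₀.1 γ * ∫ χ, (χ.1 γ : ℂ) ∂μ := by
        simp only [charMul, Circle.coe_mul, integral_const_mul]

lemma integral_eval_eq_zero_of_map_charMul {χ₀ : CharGroup G} (hχ₀ : μ.map (charMul χ₀) = μ)
    {γ : G} (hγ : (χ₀.1 γ : ℂ) ≠ 1) : ∫ χ, (χ.1 γ : ℂ) ∂μ = 0 :=
  (mul_left_eq_self₀.mp (integral_eval_eq_mul_integral hχ₀ γ).symm).resolve_left hγ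

end CharGroup

/-- Let `G` be a finitely generated abelian group (with the discrete
topology), `γ ∈ G`, and let `X` be the connected component of the identity of the
Pontryagin dual `Ĝ = Hom(G, U(1))`, which is a compact topological group.  Let `μ` be the
normalized Haar probability measure of `X` (formalized as a Borel probability measure on
`Ĝ` which is concentrated on `X` and invariant under translation by every element of
`X`).  Then the integral `∫_X χ(γ) dμ(χ)` of the `U(1) ⊂ ℂ`-valued function `χ ↦ χ(γ)`
is nonzero if and only if `γ` is a torsion element of `G`; moreover, in that case the
integral equals `1`. -/
theorem integral_char_ne_zero_iff_torsion
    (G : Type*) [AddCommGroup G] [AddGroup.FG G]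
    [MeasurableSpace (CharGroup G)] [BorelSpace (CharGroup G)]
    (γ : G) (μ : Measure (CharGroup G)) [IsProbabilityMeasure μ]
    (hsupp : μ (connectedComponent (charOne G))ᶜ = 0)
    (hinv : ∀ χ₀ ∈ connectedComponent (charOne G), μ.map (charMul χ₀) = μ) :
    ((∫ χ : CharGroup G, (χ.1 γ : ℂ) ∂μ) ≠ 0 ↔ IsOfFinAddOrder γ) ∧
      (IsOfFinAddOrder γ → (∫ χ : CharGroup G, (χ.1 γ : ℂ) ∂μ) = 1) := by
  by_cases hγ : IsOfFinAddOrder γ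
  · simp [CharGroup.integral_eval_eq_one hsupp hγ, hγ]
  · obtain ⟨χ₀, hχ₀, hχ₀γ⟩ := CharGroup.exists_mem_connectedComponent_eval_eq_neg_one hγ
    have h0 := CharGroup.integral_eval_eq_zero_of_map_charMul (hinv χ₀ hχ₀) (by rw [hχ₀γ]; norm_num)
    simp [h0, hγ]
end
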